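/- arXiv:2106.05564 — 7 statements merged into one kernel-verified Lean document; each statement's English description precedes it below -/
import Mathlib

section
/- Let K be a positive integer, let T > 0, set ω₀ = 2π/T, and let N ≥ 2K + 2 be an integer. Let 0 ≤ t₁ < t₂ < ⋯ < t_N < T be real numbers. Then the matrix A ∈ ℂ^{(N−1)×(2K+1)} defined by A[n, k] = e^{i k ω₀ t_{n+1}} − e^{i k ω₀ t_n} for k ∈ {−K, …, K} \ {0} and A[n, 0] = t_{n+1} − t_n (rows indexed by n = 1, …, N−1, columns by k = −K, …, K) has full column rank; that is, the only vector x ∈ ℂ^{2K+1} with A x = 0 is x = 0. -/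
/-!
If `A x = 0`, the function `G s = x₀ s + ∑_{k ≠ 0} x_k e^{i k ω₀ s}`, whose increments between
consecutive sampling times are the entries of `A x`, takes equal values at `t₁, …, t_N`.
Rolle's theorem applied to `Re G` and to `Im G` gives `2K + 1` interlaced zeros of `Re G'` and
as many of `Im G'`, all in `[t₁, t_N]`, which is shorter than a period. Both are trigonometric
polynomials of degree `K` (their coefficients are `y_k ± conj y_{-k}`, where `y` are those of
`G'`), and substituting `z = e^{i ω₀ s}` turns their vanishing into a Vandermonde system with
distinct nodes. So `y = 0`, and `x = 0` since `y_k` is `x_k` times a nonzero factor.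
-/

open Complex ComplexConjugate Finset Set Function

noncomputable def fourierMode (ω : ℝ) (k : ℤ) (s : ℝ) : ℂ :=
  exp (I * (k : ℂ) * (ω : ℂ) * (s : ℂ))

theorem fourierMode_eq_zpow (ω : ℝ) (k : ℤ) (s : ℝ) :
    fourierMode ω k s = exp (I * ω * s) ^ k := by
  rw [fourierMode, ← exp_int_mul]
  ring_nf

theorem conj_fourierMode (ω : ℝ) (k : ℤ) (s : ℝ) :
    conj (fourierMode ω k s) = fourierMode ω (-k) s := by
  simp only [fourierMode, ← exp_conj, map_mul, conj_I, conj_ofReal, map_intCast]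
  push_cast
  ring_nf

theorem hasDerivAt_fourierMode (ω : ℝ) (k : ℤ) (s : ℝ) :
    HasDerivAt (fourierMode ω k) (I * k * ω * fourierMode ω k s) s := by
  have h := ((hasDerivAt_id s).ofReal_comp.const_mul (I * k * ω)).cexp
  simp only [id, ofReal_one, mul_one] at h
  exact h.congr_deriv (mul_comm _ _)

theorem injOn_exp_mul_I {ω a b : ℝ} (hω : 0 < ω) (hab : (b - a) * ω < 2 * Real.pi) :
    InjOn (fun s : ℝ => exp (I * ω * s)) (Icc a b) := by
  intro x hx y hy hxy
  have hmaps : ∀ s ∈ Icc a b, ω * s ∈ Icc (ω * a) (ω * b) := fun s hs =>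
    ⟨mul_le_mul_of_nonneg_left hs.1 hω.le, mul_le_mul_of_nonneg_left hs.2 hω.le⟩
  have hinj := Circle.exp_injOn_Icc (a := ω * a) (b := ω * b) (by linarith)
  refine mul_left_cancel₀ hω.ne' (hinj (hmaps x hx) (hmaps y hy) (Circle.ext ?_))
  simpa only [Circle.coe_exp, ofReal_mul, mul_comm, mul_left_comm] using hxy

theorem eq_zero_of_forall_sum_mul_zpow_eq_zero {F : Type*} [Field F] {n : ℕ} (m : ℤ)
    {z c : Fin n → F} (hz : Injective z) (hz0 : ∀ i, z i ≠ 0)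
    (h : ∀ i, ∑ j, c j * z i ^ ((j : ℤ) - m) = 0) : c = 0 := by
  refine Matrix.eq_zero_of_forall_index_sum_mul_pow_eq_zero hz fun i => ?_
  have hshift : ∑ j, c j * z i ^ (j : ℕ) = z i ^ m * ∑ j, c j * z i ^ ((j : ℤ) - m) := by
    rw [mul_sum]
    refine sum_congr rfl fun j _ => ?_
    rw [zpow_sub₀ (hz0 i), zpow_natCast, mul_div_assoc']
    exact (mul_div_cancel₀ _ (zpow_ne_zero m (hz0 i))).symm
  rw [hshift, h i, mul_zero]

theorem eq_zero_of_forall_sum_mul_fourierMode_eq_zero {n : ℕ} (m : ℤ) {ω a b : ℝ}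
    (hω : 0 < ω) (hab : (b - a) * ω < 2 * Real.pi) {s : Fin n → ℝ} (hs : Injective s)
    (hsab : ∀ i, s i ∈ Icc a b) {c : Fin n → ℂ}
    (h : ∀ i, ∑ j, c j * fourierMode ω ((j : ℤ) - m) (s i) = 0) : c = 0 := by
  refine eq_zero_of_forall_sum_mul_zpow_eq_zero m (z := fun i => exp (I * ω * s i))
    ?_ (fun _ => exp_ne_zero _) (by simpa only [fourierMode_eq_zpow] using h)
  exact fun i j hij => hs (injOn_exp_mul_I hω hab (hsab i) (hsab j) hij)

theorem conj_sum_mul_fourierMode (K : ℕ) (ω : ℝ) (c : Fin (2 * K + 1) → ℂ) (s : ℝ) :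
    conj (∑ j, c j * fourierMode ω ((j : ℤ) - K) s) =
      ∑ j : Fin (2 * K + 1), conj (c j.rev) * fourierMode ω ((j : ℤ) - K) s := by
  simp only [map_sum, map_mul, conj_fourierMode]
  refine Fintype.sum_bijective Fin.rev Fin.rev_bijective _ _ fun j => ?_
  have hrev : ((j.rev : ℕ) : ℤ) - K = -((j : ℤ) - K) := by
    have := j.isLt; rw [Fin.val_rev]; omega
  rw [Fin.rev_rev, hrev]

theorem eq_zero_of_re_im_sum_mul_fourierMode_eq_zero {K : ℕ} {ω a b : ℝ} (hω : 0 < ω)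
    (hab : (b - a) * ω < 2 * Real.pi) {p q : Fin (2 * K + 1) → ℝ}
    (hp : Injective p) (hq : Injective q) (hpab : ∀ i, p i ∈ Icc a b)
    (hqab : ∀ i, q i ∈ Icc a b) {c : Fin (2 * K + 1) → ℂ}
    (hre : ∀ i, (∑ j, c j * fourierMode ω ((j : ℤ) - K) (p i)).re = 0)
    (him : ∀ i, (∑ j, c j * fourierMode ω ((j : ℤ) - K) (q i)).im = 0) : c = 0 := by
  have hplus : (fun j => c j + conj (c j.rev)) = 0 :=
    eq_zero_of_forall_sum_mul_fourierMode_eq_zero K hω hab hp hpab fun i => by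
      simp only [add_mul, sum_add_distrib, ← conj_sum_mul_fourierMode, add_conj, hre i,
        ofReal_zero, mul_zero]
  have hminus : (fun j => c j - conj (c j.rev)) = 0 :=
    eq_zero_of_forall_sum_mul_fourierMode_eq_zero K hω hab hq hqab fun i => by
      simp only [sub_mul, sum_sub_distrib, ← conj_sum_mul_fourierMode, sub_conj, him i,
        ofReal_zero, mul_zero, zero_mul]
  funext j
  linear_combination (congrFun hplus j + congrFun hminus j) / 2

theorem exists_mem_Ioo_clm_hasDerivAt_eq_zero {E : Type*} [NormedAddCommGroup E]
    [NormedSpace ℝ E] {f f' : ℝ → E} {a b : ℝ} (hab : a < b) (hfc : ContinuousOn f (Icc a b))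
    (hfI : f a = f b) (hff' : ∀ x ∈ Ioo a b, HasDerivAt f (f' x) x) (L : E →L[ℝ] ℝ) :
    ∃ c ∈ Ioo a b, L (f' c) = 0 :=
  exists_hasDerivAt_eq_zero hab (L.continuous.comp_continuousOn hfc) (congrArg L hfI)
    fun x hx => L.hasFDerivAt.comp_hasDerivAt x (hff' x hx)

theorem exists_strictMono_clm_hasDerivAt_eq_zero {E : Type*} [NormedAddCommGroup E]
    [NormedSpace ℝ E] {n : ℕ} {f f' : ℝ → E} (hf : ∀ x, HasDerivAt f (f' x) x)
    {t : Fin (n + 1) → ℝ} (ht : StrictMono t) (hft : ∀ i : Fin n, f (t i.castSucc) = f (t i.succ))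
    (L : E →L[ℝ] ℝ) :
    ∃ p : Fin n → ℝ, StrictMono p ∧ (∀ i, p i ∈ Ioo (t i.castSucc) (t i.succ)) ∧
      ∀ i, L (f' (p i)) = 0 := by
  have hcont : Continuous f := continuous_iff_continuousAt.2 fun x => (hf x).continuousAt
  choose p hp hpL using fun i : Fin n =>
    exists_mem_Ioo_clm_hasDerivAt_eq_zero (ht i.castSucc_lt_succ) hcont.continuousOn (hft i)
      (fun x _ => hf x) L
  refine ⟨p, fun i j hij => ?_, hp, hpL⟩
  calc p i < t i.succ := (hp i).2
    _ ≤ t j.castSucc := ht.monotone (Fin.succ_le_castSucc_iff.2 hij)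
    _ < p j := (hp j).1

theorem eq_zero_of_hasDerivAt_sum_mul_fourierMode {K : ℕ} {ω : ℝ} (hω : 0 < ω) {G : ℝ → ℂ}
    {c : Fin (2 * K + 1) → ℂ}
    (hG : ∀ s, HasDerivAt G (∑ j, c j * fourierMode ω ((j : ℤ) - K) s) s)
    {t : Fin (2 * K + 1 + 1) → ℝ} (ht : StrictMono t)
    (hspan : (t (Fin.last _) - t 0) * ω < 2 * Real.pi)
    (hGt : ∀ i : Fin (2 * K + 1), G (t i.castSucc) = G (t i.succ)) : c = 0 := by
  obtain ⟨p, hp, hpt, hre⟩ := exists_strictMono_clm_hasDerivAt_eq_zero hG ht hGt reCLM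
  obtain ⟨q, hq, hqt, him⟩ := exists_strictMono_clm_hasDerivAt_eq_zero hG ht hGt imCLM
  have hmem : ∀ {u : Fin (2 * K + 1) → ℝ}, (∀ i, u i ∈ Ioo (t i.castSucc) (t i.succ)) →
      ∀ i, u i ∈ Icc (t 0) (t (Fin.last _)) := fun hu i =>
    ⟨(ht.monotone (Fin.zero_le _)).trans (hu i).1.le,
      (hu i).2.le.trans (ht.monotone (Fin.le_last _))⟩
  exact eq_zero_of_re_im_sum_mul_fourierMode_eq_zero hω hspan hp.injective hq.injective
    (hmem hpt) (hmem hqt) hre him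

/-- The column of `A` for the frequency `k` is the increment of `modePrimitive ω₀ k` between
consecutive sampling times. -/
noncomputable def modePrimitive (ω : ℝ) (k : ℤ) (s : ℝ) : ℂ :=
  if k = 0 then (s : ℂ) else fourierMode ω k s

noncomputable def modeSlope (ω : ℝ) (k : ℤ) : ℂ :=
  if k = 0 then 1 else I * k * ω

theorem modeSlope_ne_zero {ω : ℝ} (hω : ω ≠ 0) (k : ℤ) : modeSlope ω k ≠ 0 := by
  unfold modeSlope
  split_ifs with hk
  · exact one_ne_zero
  · exact mul_ne_zero (mul_ne_zero I_ne_zero (Int.cast_ne_zero.2 hk)) (ofReal_ne_zero.2 hω)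

theorem hasDerivAt_modePrimitive (ω : ℝ) (k : ℤ) (s : ℝ) :
    HasDerivAt (modePrimitive ω k) (modeSlope ω k * fourierMode ω k s) s := by
  unfold modePrimitive modeSlope
  split_ifs with hk
  · simpa [hk, fourierMode] using (hasDerivAt_id s).ofReal_comp
  · exact hasDerivAt_fourierMode ω k s

/-- **Theorem 1 (FRI-TEM).** The IF-TEM measurement matrix `A` (with zero-frequency
column replaced by the time differences) has full column rank when `N ≥ 2K + 2`. -/
theorem matrixA_full_column_rank
    (K : ℕ) (T : ℝ) (hT : 0 < T)
    (N : ℕ) (hN : 2 * K + 2 ≤ N)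
    (t : Fin N → ℝ) (ht_mono : StrictMono t)
    (ht_nonneg : ∀ n, 0 ≤ t n) (ht_lt : ∀ n, t n < T)
    (A : Matrix (Fin (N - 1)) (Fin (2 * K + 1)) ℂ)
    (hA : ∀ (n : Fin (N - 1)) (j : Fin (2 * K + 1)),
      A n j =
        if ((j : ℤ) - (K : ℤ)) = 0 then
          (((t ⟨(n : ℕ) + 1, by have := n.isLt; omega⟩
              - t ⟨(n : ℕ), by have := n.isLt; omega⟩ : ℝ)) : ℂ)
        else
          Complex.exp (Complex.I * (((j : ℤ) - (K : ℤ) : ℤ) : ℂ)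
              * ((2 * Real.pi / T : ℝ) : ℂ)
              * ((t ⟨(n : ℕ) + 1, by have := n.isLt; omega⟩ : ℝ) : ℂ))
          - Complex.exp (Complex.I * (((j : ℤ) - (K : ℤ) : ℤ) : ℂ)
              * ((2 * Real.pi / T : ℝ) : ℂ)
              * ((t ⟨(n : ℕ), by have := n.isLt; omega⟩ : ℝ) : ℂ))) :
    ∀ x : Fin (2 * K + 1) → ℂ, A.mulVec x = 0 → x = 0 := by
  intro x hx
  set ω : ℝ := 2 * Real.pi / T with hω_def
  have hω : 0 < ω := by positivity
  set G : ℝ → ℂ := fun s => ∑ j : Fin (2 * K + 1), x j * modePrimitive ω ((j : ℤ) - K) s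
  have hG : ∀ s, HasDerivAt G (∑ j : Fin (2 * K + 1),
      (x j * modeSlope ω ((j : ℤ) - K)) * fourierMode ω ((j : ℤ) - K) s) s := fun s => by
    refine HasDerivAt.fun_sum fun j _ => ?_
    simpa only [mul_assoc] using (hasDerivAt_modePrimitive ω _ s).const_mul (x j)
  have hGt : ∀ n : Fin (N - 1), G (t ⟨n, by omega⟩) = G (t ⟨n + 1, by omega⟩) := by
    intro n
    have hAn : ∀ j, A n j = modePrimitive ω ((j : ℤ) - K) (t ⟨n + 1, by omega⟩)
        - modePrimitive ω ((j : ℤ) - K) (t ⟨n, by omega⟩) := fun j => by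
      rw [hA]
      unfold modePrimitive
      split_ifs
      · push_cast; rfl
      · rfl
    have hxn := congrFun hx n
    simp only [Matrix.mulVec, dotProduct, hAn, Pi.zero_apply] at hxn
    rw [eq_comm, ← sub_eq_zero, ← hxn]
    simp only [G, ← sum_sub_distrib]
    exact sum_congr rfl fun j _ => by ring
  have hc := eq_zero_of_hasDerivAt_sum_mul_fourierMode hω hG
    (ht_mono.comp (Fin.strictMono_castLE (by omega))) ?_ fun i => hGt ⟨i, by omega⟩
  · funext j
    exact (mul_eq_zero.1 (congrFun hc j)).resolve_right (modeSlope_ne_zero hω.ne' _)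
  · calc (t (Fin.castLE _ (Fin.last _)) - t (Fin.castLE _ 0)) * ω < T * ω := by
          gcongr
          linarith [ht_lt (Fin.castLE (by omega) (Fin.last (2 * K + 1))),
            ht_nonneg (Fin.castLE (by omega) (0 : Fin (2 * K + 1 + 1)))]
      _ = 2 * Real.pi := by rw [hω_def]; field_simp
end

section
/- Let T > 0, ω₀ = 2π/T, and let L ≥ 1 and K ≥ L be integers. Let h : ℝ → ℝ be Lebesgue integrable with Fourier transform ĥ(ω) = ∫_ℝ h(t) e^{−iωt} dt satisfying ĥ(kω₀) ≠ 0 for every integer k with |k| ≤ K. For amplitudes a₁, …, a_L > 0 and pairwise distinct delays τ₁, …, τ_L ∈ [0, T), define the filtered signal y_{a,τ}(t) = Σ_{k=−K}^{K} (1/T) ĥ(kω₀) (Σ_{ℓ=1}^{L} a_ℓ e^{−i k ω₀ τ_ℓ}) e^{i k ω₀ t}. Let 0 ≤ t₁ < t₂ < ⋯ < t_N < T with N ≥ 2K + 2. If two such parameter sets (a, τ) and (a′, τ′) satisfy ∫_{t_n}^{t_{n+1}} y_{a,τ}(t) dt = ∫_{t_n}^{t_{n+1}} y_{a′,τ′}(t)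 dt for every n = 1, …, N−1, then there exists a permutation π of {1, …, L} such that τ′_ℓ = τ_{π(ℓ)} and a′_ℓ = a_{π(ℓ)} for all ℓ. -/
/-!
The measurements are integrals of `y_{a,τ} - y_{a',τ'}`, a trigonometric polynomial of degree `K`,
over `2K + 1` consecutive intervals inside one period. By Rolle, each vanishing integral yields a
zero of the real part and a zero of the imaginary part in its interval; both parts are trigonometric
polynomials of degree `K`, so `2K + 1` zeros in a period force them to vanish (Vandermonde in
`e^{iω₀t}`), and all Fourier coefficients agree. Dividing by `ĥ(kω₀)/T ≠ 0`, the atomic measures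
`∑ a_ℓ δ_{w_ℓ}` and `∑ a'_ℓ δ_{w'_ℓ}`, with `w_ℓ = e^{-iω₀τ_ℓ}`, have equal moments of orders
`-K, …, K`; together they have at most `2L ≤ 2K` atoms, so a second Vandermonde argument makes
them equal, which identifies the parameters up to a permutation.
-/

open MeasureTheory Complex Set Function
open scoped ComplexConjugate

theorem injOn_cexp_two_pi_div_mul {T : ℝ} (hT : 0 < T) :
    InjOn (fun s : ℝ => cexp (I * ((2 * Real.pi / T : ℝ) : ℂ) * s)) (Ico 0 T) := by
  have hmem : ∀ s ∈ Ico 0 T, 2 * Real.pi / T * s ∈ Ico 0 (2 * Real.pi) := fun s hs =>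
    ⟨by have := hs.1; positivity, by
      calc 2 * Real.pi / T * s < 2 * Real.pi / T * T := by gcongr; exact hs.2
        _ = 2 * Real.pi := by field_simp⟩
  intro x hx x' hx' hxx'
  have hcircle : Circle.exp (2 * Real.pi / T * x) = Circle.exp (2 * Real.pi / T * x') := by
    ext1
    simp only [Circle.coe_exp]
    convert hxx' using 2 <;> push_cast <;> ring
  exact mul_left_cancel₀ (by positivity)
    (Circle.exp_injOn_Ico (by simp) (hmem x hx) (hmem x' hx') hcircle)

theorem exists_mem_Ioo_eq_zero_of_intervalIntegral_eq_zero {g : ℝ → ℝ} (hg : Continuous g)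
    {a b : ℝ} (hab : a < b) (h : ∫ x in a..b, g x = 0) : ∃ c ∈ Ioo a b, g c = 0 := by
  have hderiv : ∀ x, HasDerivAt (fun u => ∫ v in a..u, g v) (g x) x := fun x =>
    (hg.integral_hasStrictDerivAt a x).hasDerivAt
  refine exists_hasDerivAt_eq_zero hab
    (fun x _ => (hderiv x).continuousAt.continuousWithinAt) ?_ fun x _ => hderiv x
  rw [intervalIntegral.integral_same, h]

theorem exists_strictMono_zeros_of_intervalIntegral_eq_zero {n : ℕ} {t : Fin (n + 1) → ℝ}
    (ht : StrictMono t) {g : ℝ → ℝ} (hg : Continuous g)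
    (h : ∀ i : Fin n, ∫ x in t i.castSucc..t i.succ, g x = 0) :
    ∃ s : Fin n → ℝ, StrictMono s ∧ (∀ i, s i ∈ Ioo (t 0) (t (Fin.last n))) ∧ ∀ i, g (s i) = 0 := by
  choose s hs hgs using fun i =>
    exists_mem_Ioo_eq_zero_of_intervalIntegral_eq_zero hg (ht i.castSucc_lt_succ) (h i)
  refine ⟨s, fun i j hij => ?_, fun i => ⟨?_, ?_⟩, hgs⟩
  · calc s i < t i.succ := (hs i).2
      _ ≤ t j.castSucc := ht.monotone (Fin.succ_le_castSucc_iff.2 hij)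
      _ < s j := (hs j).1
  · exact (ht.monotone (Fin.zero_le _)).trans_lt (hs i).1
  · exact (hs i).2.trans_le (ht.monotone (Fin.le_last _))

theorem eq_zero_of_forall_sum_mul_zpow_eq_zero_s2 {F : Type*} [Field F] {s : Finset F}
    (hs : ∀ z ∈ s, z ≠ 0) {c : F → F} (m : ℤ)
    (h : ∀ k : ℕ, k < s.card → ∑ z ∈ s, c z * z ^ (m + k) = 0) : ∀ z ∈ s, c z = 0 := by
  intro z hz
  set e := s.equivFin
  have hv : (fun i => c (e.symm i) * (e.symm i : F) ^ m) = 0 := by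
    refine Matrix.eq_zero_of_forall_pow_sum_mul_pow_eq_zero (f := fun i => (e.symm i : F))
      (Subtype.val_injective.comp e.symm.injective) fun k => ?_
    rw [← h k k.isLt, ← s.sum_coe_sort, ← e.symm.sum_comp]
    refine Fintype.sum_congr _ _ fun i => ?_
    rw [zpow_add₀ (hs _ (e.symm i).2), zpow_natCast, mul_assoc]
  have hz' := congrFun hv (e ⟨z, hz⟩)
  simp only [Equiv.symm_apply_apply, Pi.zero_apply] at hz'
  exact (mul_eq_zero.1 hz').resolve_right (zpow_ne_zero _ (hs z hz))

theorem sum_fiber_mul_zpow {ι F : Type*} [Fintype ι] [Field F] [DecidableEq F] (w a : ι → F)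
    {s : Finset F} (hs : ∀ i, w i ∈ s) (k : ℤ) :
    ∑ z ∈ s, (∑ i, if w i = z then a i else 0) * z ^ k = ∑ i, a i * w i ^ k := by
  simp_rw [Finset.sum_mul, ite_mul, zero_mul]
  rw [Finset.sum_comm]
  refine Fintype.sum_congr _ _ fun i => ?_
  rw [Finset.sum_ite_eq, if_pos (hs i)]

theorem exists_perm_of_sum_mul_zpow_eq {ι F : Type*} [Fintype ι] [Field F] {a a' w w' : ι → F}
    (ha' : ∀ i, a' i ≠ 0) (hw : Injective w) (hw' : Injective w')
    (hw₀ : ∀ i, w i ≠ 0) (hw₀' : ∀ i, w' i ≠ 0) (m : ℤ)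
    (h : ∀ k : ℕ, k < 2 * Fintype.card ι →
      ∑ i, a i * w i ^ (m + k) = ∑ i, a' i * w' i ^ (m + k)) :
    ∃ π : Equiv.Perm ι, ∀ i, w' i = w (π i) ∧ a' i = a (π i) := by
  classical
  set W := Finset.univ.image w ∪ Finset.univ.image w'
  have hW : ∀ i, w i ∈ W := fun i =>
    Finset.mem_union_left _ (Finset.mem_image_of_mem w (Finset.mem_univ i))
  have hW' : ∀ i, w' i ∈ W := fun i =>
    Finset.mem_union_right _ (Finset.mem_image_of_mem w' (Finset.mem_univ i))
  have hcard : W.card ≤ 2 * Fintype.card ι := by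
    refine (Finset.card_union_le _ _).trans ?_
    have := Finset.card_image_le (s := Finset.univ) (f := w)
    have := Finset.card_image_le (s := Finset.univ) (f := w')
    simp only [Finset.card_univ] at *
    omega
  -- `c z` is the mass that `∑ aᵢ δ_{wᵢ} - ∑ a'ᵢ δ_{w'ᵢ}` puts at `z`
  have hc := eq_zero_of_forall_sum_mul_zpow_eq_zero_s2 (s := W)
    (c := fun z => (∑ i, if w i = z then a i else 0) - ∑ i, if w' i = z then a' i else 0)
    (by
      simp only [W, Finset.mem_union, Finset.mem_image]
      rintro z (⟨i, -, rfl⟩ | ⟨i, -, rfl⟩) <;> simp [hw₀, hw₀'])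
    m fun k hk => by
      simp only [sub_mul, Finset.sum_sub_distrib, sum_fiber_mul_zpow _ _ hW,
        sum_fiber_mul_zpow _ _ hW', h k (hk.trans_le hcard), sub_self]
  have hmatch : ∀ i, ∃ j, w j = w' i ∧ a j = a' i := by
    intro i
    have hci := hc (w' i) (hW' i)
    simp only [hw'.eq_iff, Finset.sum_ite_eq', Finset.mem_univ, if_true, sub_eq_zero] at hci
    obtain ⟨j, hj⟩ : ∃ j, w j = w' i := by
      by_contra! hnone
      simp only [hnone, if_false, Finset.sum_const_zero] at hci
      exact ha' i hci.symm
    simp only [← hj, hw.eq_iff, Finset.sum_ite_eq', Finset.mem_univ, if_true] at hci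
    exact ⟨j, hj, hci⟩
  choose π hπw hπa using hmatch
  have hπ : Injective π := fun i i' hii' => hw' (by rw [← hπw, hii', hπw])
  exact ⟨Equiv.ofBijective π hπ.bijective_of_finite, fun i => ⟨(hπw i).symm, (hπa i).symm⟩⟩

noncomputable def trigSum (M : ℕ) (ω : ℝ) (b : Fin (2 * M + 1) → ℂ) (u : ℝ) : ℂ :=
  ∑ j : Fin (2 * M + 1), b j * cexp (I * (((j : ℤ) - (M : ℤ) : ℤ) : ℂ) * (ω : ℂ) * u)

section TrigSum

variable {M : ℕ} {ω : ℝ}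

theorem continuous_trigSum (b : Fin (2 * M + 1) → ℂ) : Continuous (trigSum M ω b) := by
  unfold trigSum; fun_prop

theorem trigSum_sub (b b' : Fin (2 * M + 1) → ℂ) :
    trigSum M ω (b - b') = trigSum M ω b - trigSum M ω b' := by
  funext u
  simp only [trigSum, Pi.sub_apply, sub_mul, Finset.sum_sub_distrib]

theorem conj_trigSum (b : Fin (2 * M + 1) → ℂ) (u : ℝ) :
    conj (trigSum M ω b u) = trigSum M ω (fun j => conj (b j.rev)) u := by
  rw [trigSum, trigSum, map_sum]
  refine Fintype.sum_equiv Fin.revPerm _ _ fun j => ?_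
  have hrev : (((Fin.rev j : ℕ) : ℤ) - M : ℤ) = -((j : ℤ) - M) := by rw [Fin.val_rev]; omega
  simp only [Fin.revPerm_apply, Fin.rev_rev, map_mul, ← exp_conj, hrev, conj_I, conj_ofReal,
    map_intCast]
  push_cast
  ring_nf

theorem trigSum_add_conj_rev (b : Fin (2 * M + 1) → ℂ) (u : ℝ) :
    trigSum M ω (fun j => b j + conj (b j.rev)) u = (2 * (trigSum M ω b u).re : ℝ) := by
  rw [← Complex.add_conj, conj_trigSum]
  simp only [trigSum, add_mul, Finset.sum_add_distrib]

theorem trigSum_sub_conj_rev (b : Fin (2 * M + 1) → ℂ) (u : ℝ) :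
    trigSum M ω (fun j => b j - conj (b j.rev)) u = (2 * (trigSum M ω b u).im : ℝ) * I := by
  rw [← Complex.sub_conj, conj_trigSum]
  simp only [trigSum, sub_mul, Finset.sum_sub_distrib]

theorem cexp_pow_mul_trigSum (b : Fin (2 * M + 1) → ℂ) (s : ℝ) :
    cexp (I * ω * s) ^ M * trigSum M ω b s = ∑ j, b j * cexp (I * ω * s) ^ (j : ℕ) := by
  have hz : cexp (I * ω * s) ≠ 0 := exp_ne_zero _
  rw [trigSum, Finset.mul_sum]
  refine Fintype.sum_congr _ _ fun j => ?_
  rw [show I * (((j : ℤ) - M : ℤ) : ℂ) * ω * s = (((j : ℤ) - M : ℤ) : ℂ) * (I * ω * s) by ring,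
    exp_int_mul, mul_left_comm, ← zpow_natCast, ← zpow_natCast _ (j : ℕ), ← zpow_add₀ hz,
    add_sub_cancel]

theorem eq_zero_of_trigSum_eq_zero {s : Fin (2 * M + 1) → ℝ}
    (hs : Injective fun n => cexp (I * ω * s n)) {b : Fin (2 * M + 1) → ℂ}
    (hb : ∀ n, trigSum M ω b (s n) = 0) : b = 0 :=
  Matrix.eq_zero_of_forall_index_sum_mul_pow_eq_zero hs fun n => by
    rw [← cexp_pow_mul_trigSum, hb, mul_zero]

theorem eq_zero_of_intervalIntegral_trigSum_eq_zero {T : ℝ} (hT : 0 < T)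
    {t : Fin (2 * M + 1 + 1) → ℝ} (ht : StrictMono t) (ht₀ : 0 ≤ t 0) (htT : t (Fin.last _) < T)
    {b : Fin (2 * M + 1) → ℂ}
    (h : ∀ i : Fin (2 * M + 1),
      ∫ u in t i.castSucc..t i.succ, trigSum M (2 * Real.pi / T) b u = 0) : b = 0 := by
  have hzeros : ∀ p : ℂ →L[ℝ] ℝ, ∃ s : Fin (2 * M + 1) → ℝ,
      Injective (fun n => cexp (I * ((2 * Real.pi / T : ℝ) : ℂ) * s n)) ∧
      ∀ n, p (trigSum M (2 * Real.pi / T) b (s n)) = 0 := by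
    intro p
    obtain ⟨s, hs, hmem, hps⟩ := exists_strictMono_zeros_of_intervalIntegral_eq_zero ht
      (p.continuous.comp (continuous_trigSum b)) fun i => by
        simp only [comp_apply]
        rw [p.intervalIntegral_comp_comm ((continuous_trigSum b).intervalIntegrable _ _), h i,
          map_zero]
    have hsub : ∀ n, s n ∈ Ico 0 T := fun n =>
      ⟨ht₀.trans (hmem n).1.le, (hmem n).2.trans htT⟩
    exact ⟨s, fun n n' hnn' => hs.injective (injOn_cexp_two_pi_div_mul hT (hsub n) (hsub n') hnn'),
      hps⟩
  obtain ⟨s, hs, hre⟩ := hzeros reCLM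
  obtain ⟨s', hs', him⟩ := hzeros imCLM
  have hsymm : (fun j => b j + conj (b j.rev)) = 0 :=
    eq_zero_of_trigSum_eq_zero hs fun n => by
      rw [trigSum_add_conj_rev, show (trigSum M _ b (s n)).re = 0 from hre n]; simp
  have hanti : (fun j => b j - conj (b j.rev)) = 0 :=
    eq_zero_of_trigSum_eq_zero hs' fun n => by
      rw [trigSum_sub_conj_rev, show (trigSum M _ b (s' n)).im = 0 from him n]; simp
  funext j
  linear_combination (congrFun hsymm j + congrFun hanti j) / 2

end TrigSum

theorem sum_mul_cexp_neg_int_mul {ι : Type*} [Fintype ι] (α σ : ι → ℝ) (ω : ℝ) (k : ℤ) :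
    ∑ ℓ, (α ℓ : ℂ) * cexp (-I * (k : ℂ) * ω * σ ℓ) =
      ∑ ℓ, (α ℓ : ℂ) * (cexp (I * ω * σ ℓ))⁻¹ ^ k :=
  Fintype.sum_congr _ _ fun ℓ => by rw [← exp_neg, ← exp_int_mul]; ring_nf

/-- The Fourier coefficient of index `j - K` of the filtered pulse stream `y_{α,σ}`. -/
noncomputable def streamCoeff (T : ℝ) (K : ℕ) (hhat : ℝ → ℂ) {ι : Type*} [Fintype ι]
    (α σ : ι → ℝ) (j : Fin (2 * K + 1)) : ℂ :=
  (1 / (T : ℂ)) * hhat (((j : ℤ) - (K : ℤ)) * (2 * Real.pi / T)) *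
    ∑ ℓ, (α ℓ : ℂ) * cexp (-I * (((j : ℤ) - (K : ℤ) : ℤ) : ℂ) * ((2 * Real.pi / T : ℝ) : ℂ) * σ ℓ)

theorem sum_mul_zpow_eq_of_streamCoeff_eq {T : ℝ} (hT : 0 < T) {K : ℕ} {hhat : ℝ → ℂ}
    (hhat_ne : ∀ k : ℤ, |k| ≤ (K : ℤ) → hhat (k * (2 * Real.pi / T)) ≠ 0)
    {ι : Type*} [Fintype ι] {α α' σ σ' : ι → ℝ}
    (h : streamCoeff T K hhat α σ = streamCoeff T K hhat α' σ') {k : ℕ} (hk : k ≤ 2 * K) :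
    ∑ ℓ, (α ℓ : ℂ) * (cexp (I * ((2 * Real.pi / T : ℝ) : ℂ) * σ ℓ))⁻¹ ^ (-(K : ℤ) + k) =
      ∑ ℓ, (α' ℓ : ℂ) * (cexp (I * ((2 * Real.pi / T : ℝ) : ℂ) * σ' ℓ))⁻¹ ^ (-(K : ℤ) + k) := by
  have hne : (1 / (T : ℂ)) * hhat ((((k : ℤ) : ℝ) - ((K : ℤ) : ℝ)) * (2 * Real.pi / T)) ≠ 0 :=
    mul_ne_zero (one_div_ne_zero (ofReal_ne_zero.2 hT.ne'))
      (by simpa only [Int.cast_sub] using hhat_ne ((k : ℤ) - K) (abs_le.2 ⟨by omega, by omega⟩))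
  have hk : ((k : ℤ) - K : ℤ) = -(K : ℤ) + k := by ring
  have hj := congrFun h ⟨k, by omega⟩
  simp only [streamCoeff] at hj
  rwa [mul_right_inj' hne, sum_mul_cexp_neg_int_mul, sum_mul_cexp_neg_int_mul, hk] at hj

/-- **Theorem 2 (FRI-TEM).** Perfect recovery of the FRI parameters from `N ≥ 2K + 2`
IF-TEM measurements, with a sampling kernel passing the Fourier-series coefficients
indexed by `-K, …, K` and `K ≥ L`. -/
theorem fri_tem_perfect_recovery
    (T : ℝ) (hT : 0 < T) (L K : ℕ) (hKL : L ≤ K)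
    (hhat : ℝ → ℂ)
    (hhat_ne : ∀ k : ℤ, |k| ≤ (K : ℤ) → hhat (k * (2 * Real.pi / T)) ≠ 0)
    (y : (Fin L → ℝ) → (Fin L → ℝ) → ℝ → ℂ)
    (hy_def : ∀ (α τ : Fin L → ℝ) (u : ℝ),
      y α τ u = ∑ j : Fin (2 * K + 1),
        (1 / (T : ℂ)) * hhat (((j : ℤ) - (K : ℤ)) * (2 * Real.pi / T))
          * (∑ ℓ : Fin L, (α ℓ : ℂ) *
              Complex.exp (-Complex.I * (((j : ℤ) - (K : ℤ) : ℤ) : ℂ)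
                * ((2 * Real.pi / T : ℝ) : ℂ) * (τ ℓ : ℂ)))
          * Complex.exp (Complex.I * (((j : ℤ) - (K : ℤ) : ℤ) : ℂ)
              * ((2 * Real.pi / T : ℝ) : ℂ) * (u : ℂ)))
    (a a' τ τ' : Fin L → ℝ)
    (ha'_pos : ∀ ℓ, 0 < a' ℓ)
    (hτ_mem : ∀ ℓ, τ ℓ ∈ Set.Ico 0 T) (hτ'_mem : ∀ ℓ, τ' ℓ ∈ Set.Ico 0 T)
    (hτ_inj : Function.Injective τ) (hτ'_inj : Function.Injective τ')
    (N : ℕ) (hN : 2 * K + 2 ≤ N)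
    (t : Fin N → ℝ) (ht_mono : StrictMono t)
    (ht_nonneg : ∀ n, 0 ≤ t n) (ht_lt : ∀ n, t n < T)
    (hmeas : ∀ n : Fin (N - 1),
      (∫ u in (t ⟨(n : ℕ), by have := n.isLt; omega⟩)..(t ⟨(n : ℕ) + 1, by have := n.isLt; omega⟩),
        y a τ u)
      = ∫ u in (t ⟨(n : ℕ), by have := n.isLt; omega⟩)..(t ⟨(n : ℕ) + 1, by have := n.isLt; omega⟩),
        y a' τ' u) :
    ∃ π : Equiv.Perm (Fin L), ∀ ℓ : Fin L, τ' ℓ = τ (π ℓ) ∧ a' ℓ = a (π ℓ) := by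
  have hy : ∀ α σ, y α σ = trigSum K (2 * Real.pi / T) (streamCoeff T K hhat α σ) :=
    fun α σ => funext (hy_def α σ)
  have hcoef : streamCoeff T K hhat a τ = streamCoeff T K hhat a' τ' := by
    refine sub_eq_zero.1 (eq_zero_of_intervalIntegral_trigSum_eq_zero hT
      (t := t ∘ Fin.castLE (by omega)) (ht_mono.comp (Fin.strictMono_castLE _))
      (ht_nonneg _) (ht_lt _) fun i => ?_)
    simp only [trigSum_sub, Pi.sub_apply]
    rw [intervalIntegral.integral_sub ((continuous_trigSum _).intervalIntegrable _ _)
      ((continuous_trigSum _).intervalIntegrable _ _), ← hy, ← hy, sub_eq_zero]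
    exact hmeas ⟨i, by omega⟩
  have hw : ∀ σ : Fin L → ℝ, (∀ ℓ, σ ℓ ∈ Ico 0 T) → Injective σ →
      Injective fun ℓ => (cexp (I * ((2 * Real.pi / T : ℝ) : ℂ) * σ ℓ))⁻¹ :=
    fun σ hσ hσ_inj ℓ ℓ' h =>
      hσ_inj (injOn_cexp_two_pi_div_mul hT (hσ ℓ) (hσ ℓ') (inv_injective h))
  obtain ⟨π, hπ⟩ := exists_perm_of_sum_mul_zpow_eq (fun ℓ => ofReal_ne_zero.2 (ha'_pos ℓ).ne')
    (hw τ hτ_mem hτ_inj) (hw τ' hτ'_mem hτ'_inj) (fun _ => inv_ne_zero (exp_ne_zero _))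
    (fun _ => inv_ne_zero (exp_ne_zero _)) (-K) fun k hk =>
      sum_mul_zpow_eq_of_streamCoeff_eq hT hhat_ne hcoef (by rw [Fintype.card_fin] at hk; omega)
  exact ⟨π, fun ℓ => ⟨injOn_cexp_two_pi_div_mul hT (hτ'_mem ℓ) (hτ_mem _) (inv_injective (hπ ℓ).1),
    ofReal_injective (hπ ℓ).2⟩⟩
end

section
/- Let K be a positive integer, T > 0, ω₀ = 2π/T, and let f(t) = Σ_{k=−K}^{K} c_k e^{i k ω₀ t} with complex coefficients satisfying the conjugate symmetry c_{−k} = conj(c_k) for all k (so f is a real-valued trigonometric polynomial of degree K and period T). Suppose there exist real numbers a and d and N ≥ 2K + 2 distinct points 0 ≤ t₁ < t₂ < ⋯ < t_N < T such that f(t_n) = a t_n + d for every n = 1, …, N. Then a = 0, c_k = 0 for all k ≠ 0, and c₀ = d. -/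
open Finset Complex ComplexConjugate
open scoped Real

/-!
Since `c₋ₖ = conj cₖ`, `f` is real, so `f - (a t + d)` is a real function with `2K + 2` zeros in
`[0, T)` and Rolle's theorem gives `2K + 1` points of `(0, T)` where `f' = a`. Now `f' - a` is again
a trigonometric polynomial of degree `K`, and the substitution `z = e^{i ω₀ t}` turns it into
`z^{-K}` times an algebraic polynomial of degree at most `2K`, which has `2K + 1` distinct roots on
the unit circle. Hence every coefficient of `f' - a` vanishes: `a = 0` and `i k ω₀ cₖ = 0` for
`k ≠ 0`. Then `f = c₀`, and any agreement point gives `c₀ = d`.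
-/

theorem eq_zero_of_sum_mul_zpow_eq_zero {F ι : Type*} [Field F] [Fintype ι] (M : ℕ)
    (B : ℤ → F) {z : ι → F} (hz : Function.Injective z) (hz0 : ∀ i, z i ≠ 0)
    (hcard : 2 * M < Fintype.card ι) (hB : ∀ i, ∑ k ∈ Icc (-(M : ℤ)) M, B k * z i ^ k = 0) :
    ∀ k ∈ Icc (-(M : ℤ)) M, B k = 0 := by
  set P : Polynomial F := ∑ k ∈ Icc (-(M : ℤ)) M, .monomial (k + M).toNat (B k)
  have hdeg : P.natDegree ≤ 2 * M :=
    Polynomial.natDegree_sum_le_of_forall_le _ _ fun k hk =>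
      (Polynomial.natDegree_monomial_le _).trans (by grind)
  have heval (x : F) (hx : x ≠ 0) :
      P.eval x = x ^ M * ∑ k ∈ Icc (-(M : ℤ)) M, B k * x ^ k := by
    rw [Polynomial.eval_finsetSum, mul_sum]
    refine sum_congr rfl fun k hk => ?_
    have hpow : x ^ (k + M).toNat = x ^ M * x ^ k := by
      rw [← zpow_natCast, Int.toNat_of_nonneg (by grind), zpow_add₀ hx, zpow_natCast,
        mul_comm]
    rw [Polynomial.eval_monomial, hpow]
    ring
  have hP : P = 0 :=
    Polynomial.eq_zero_of_natDegree_lt_card_of_eval_eq_zero P hz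
      (fun i => by rw [heval _ (hz0 i), hB i, mul_zero]) (by omega)
  intro k hk
  have hcoeff : P.coeff (k + M).toNat = B k := by
    rw [Polynomial.finsetSum_coeff, sum_eq_single_of_mem k hk]
    · exact Polynomial.coeff_monomial_same _ _
    · intro j hj hjk
      exact Polynomial.coeff_monomial_of_ne _ (by grind)
  rw [← hcoeff, hP, Polynomial.coeff_zero]

theorem exists_strictMono_hasDerivAt_eq_zero {n : ℕ} {F F' : ℝ → ℝ}
    (hF : ∀ x, HasDerivAt F (F' x) x) {t : Fin (n + 1) → ℝ} (ht : StrictMono t)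
    (hzero : ∀ i, F (t i) = 0) :
    ∃ s : Fin n → ℝ, StrictMono s ∧ (∀ i, s i ∈ Set.Ioo (t i.castSucc) (t i.succ)) ∧
      ∀ i, F' (s i) = 0 := by
  have hrolle (i : Fin n) : ∃ x ∈ Set.Ioo (t i.castSucc) (t i.succ), F' x = 0 :=
    exists_hasDerivAt_eq_zero (ht i.castSucc_lt_succ)
      (fun x _ => (hF x).continuousAt.continuousWithinAt) (by rw [hzero, hzero])
      (fun x _ => hF x)
  choose s hs hs' using hrolle
  refine ⟨s, fun i j hij => ?_, hs, hs'⟩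
  calc s i < t i.succ := (hs i).2
    _ ≤ t j.castSucc := ht.monotone (Fin.succ_le_castSucc_iff.mpr hij)
    _ < s j := (hs j).1

noncomputable def trigPoly (K : ℕ) (T : ℝ) (c : ℤ → ℂ) (u : ℝ) : ℂ :=
  ∑ k ∈ Icc (-(K : ℤ)) K, c k * exp (I * k * ((2 * π / T : ℝ) : ℂ) * u)

noncomputable def trigPolyDerivCoeff (T : ℝ) (c : ℤ → ℂ) (k : ℤ) : ℂ :=
  I * k * ((2 * π / T : ℝ) : ℂ) * c k

section TrigPoly

variable {K : ℕ} {T : ℝ} {c : ℤ → ℂ}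

theorem hasDerivAt_trigPoly (u : ℝ) :
    HasDerivAt (trigPoly K T c) (trigPoly K T (trigPolyDerivCoeff T c) u) u := by
  unfold trigPoly
  refine HasDerivAt.fun_sum fun k _ => ?_
  have hlin : HasDerivAt (fun v : ℝ => I * k * ((2 * π / T : ℝ) : ℂ) * v)
      (I * k * ((2 * π / T : ℝ) : ℂ)) u := by
    simpa using ((hasDerivAt_id u).ofReal_comp).const_mul (I * k * ((2 * π / T : ℝ) : ℂ))
  exact (hlin.cexp.const_mul (c k)).congr_deriv (by rw [trigPolyDerivCoeff]; ring)

theorem hasDerivAt_re_trigPoly (u : ℝ) :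
    HasDerivAt (fun v => (trigPoly K T c v).re) (trigPoly K T (trigPolyDerivCoeff T c) u).re u :=
  reCLM.hasFDerivAt.comp_hasDerivAt u (hasDerivAt_trigPoly u)

theorem conj_trigPoly (hc : ∀ k ∈ Icc (-(K : ℤ)) K, c (-k) = conj (c k)) (u : ℝ) :
    conj (trigPoly K T c u) = trigPoly K T c u := by
  rw [trigPoly, map_sum]
  refine sum_nbij' (fun k => -k) (fun k => -k) (by grind) (by grind) (by simp) (by simp)
    fun k hk => ?_
  rw [map_mul, ← hc k hk, ← exp_conj]
  congr 2
  simp only [map_mul, conj_I, conj_ofReal, map_intCast]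
  push_cast
  ring

theorem ofReal_re_trigPoly (hc : ∀ k ∈ Icc (-(K : ℤ)) K, c (-k) = conj (c k)) (u : ℝ) :
    ((trigPoly K T c u).re : ℂ) = trigPoly K T c u :=
  conj_eq_iff_re.mp (conj_trigPoly hc u)

theorem trigPolyDerivCoeff_neg (hc : ∀ k ∈ Icc (-(K : ℤ)) K, c (-k) = conj (c k)) :
    ∀ k ∈ Icc (-(K : ℤ)) K, trigPolyDerivCoeff T c (-k) = conj (trigPolyDerivCoeff T c k) := by
  intro k hk
  simp only [trigPolyDerivCoeff, hc k hk, map_mul, conj_I, conj_ofReal, map_intCast]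
  push_cast
  ring

theorem trigPoly_sub_single_zero (a : ℂ) (u : ℝ) :
    trigPoly K T (c - Pi.single 0 a) u = trigPoly K T c u - a := by
  simp only [trigPoly, Pi.sub_apply, sub_mul, sum_sub_distrib, Pi.single_apply, ite_mul, zero_mul,
    sum_ite_eq', mem_Icc]
  simp

theorem trigPoly_eq_coeff_zero (hc : ∀ k ∈ Icc (-(K : ℤ)) K, k ≠ 0 → c k = 0) (u : ℝ) :
    trigPoly K T c u = c 0 := by
  rw [trigPoly, sum_eq_single_of_mem 0 (by simp) fun k hk hk0 => by rw [hc k hk hk0, zero_mul]]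
  simp

theorem coeff_eq_zero_of_trigPoly_eq_zero {ι : Type*} [Fintype ι] (hT : 0 < T) {s : ι → ℝ}
    (hs : Function.Injective s) (hsT : ∀ i, s i ∈ Set.Ico 0 T) (hcard : 2 * K < Fintype.card ι)
    (hzero : ∀ i, trigPoly K T c (s i) = 0) : ∀ k ∈ Icc (-(K : ℤ)) K, c k = 0 := by
  set ω := 2 * π / T with hω_def
  have hω : 0 < ω := by positivity
  have hωs (i : ι) : ω * s i ∈ Set.Ico 0 (2 * π) := by
    have := hsT i
    refine ⟨by nlinarith [this.1], ?_⟩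
    calc ω * s i < ω * T := by gcongr; exact this.2
      _ = 2 * π := div_mul_cancel₀ _ hT.ne'
  have hz : Function.Injective fun i => (Circle.exp (ω * s i) : ℂ) := fun i j hij =>
    hs <| mul_left_cancel₀ hω.ne' <| Circle.exp_injOn_Ico (by simp) (hωs i) (hωs j)
      (Circle.coe_injective hij)
  refine eq_zero_of_sum_mul_zpow_eq_zero K c hz (fun i => by simp) (by simpa using hcard)
    fun i => ?_
  rw [← hzero i, trigPoly]
  refine sum_congr rfl fun k _ => ?_
  rw [Circle.coe_exp, ← exp_int_mul, ofReal_mul, hω_def]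
  ring_nf

end TrigPoly

theorem trig_poly_eq_affine_many_points_general
    (K : ℕ) (T : ℝ) (hT : 0 < T)
    (c : ℤ → ℂ)
    (hconj : ∀ k : ℤ, k ∈ Finset.Icc (-(K : ℤ)) (K : ℤ) →
      c (-k) = (starRingEnd ℂ) (c k))
    (f : ℝ → ℂ)
    (hf : ∀ u : ℝ, f u = ∑ k ∈ Finset.Icc (-(K : ℤ)) (K : ℤ),
      c k * Complex.exp (Complex.I * (k : ℂ) * ((2 * Real.pi / T : ℝ) : ℂ) * (u : ℂ)))
    (a d : ℝ)
    (N : ℕ) (hN : 2 * K + 2 ≤ N)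
    (t : Fin N → ℝ) (ht_mono : StrictMono t)
    (ht_nonneg : ∀ n, 0 ≤ t n) (ht_lt : ∀ n, t n < T)
    (hagree : ∀ n : Fin N, f (t n) = ((a * t n + d : ℝ) : ℂ)) :
    a = 0 ∧ (∀ k : ℤ, k ∈ Finset.Icc (-(K : ℤ)) (K : ℤ) → k ≠ 0 → c k = 0) ∧ c 0 = (d : ℂ) := by
  obtain rfl : f = trigPoly K T c := funext hf
  obtain ⟨s, hs_mono, hs_mem, hs_crit⟩ := exists_strictMono_hasDerivAt_eq_zero
    (F := fun u => (trigPoly K T c u).re - (a * u + d))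
    (fun u => (hasDerivAt_re_trigPoly u).sub (((hasDerivAt_id u).const_mul a).add_const d))
    (ht_mono.comp (Fin.strictMono_castLE hN)) (fun i => by simp [hagree])
  have hcrit (i) : trigPoly K T (trigPolyDerivCoeff T c - Pi.single 0 (a : ℂ)) (s i) = 0 := by
    rw [trigPoly_sub_single_zero, ← ofReal_re_trigPoly (trigPolyDerivCoeff_neg hconj), sub_eq_zero,
      ofReal_inj]
    linarith [hs_crit i]
  have hB := coeff_eq_zero_of_trigPoly_eq_zero hT hs_mono.injective
    (fun i => ⟨(ht_nonneg _).trans (hs_mem i).1.le, (hs_mem i).2.trans (ht_lt _)⟩) (by simp) hcrit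
  have ha : a = 0 := by simpa [trigPolyDerivCoeff] using hB 0 (by simp)
  have hc (k : ℤ) (hk : k ∈ Icc (-(K : ℤ)) K) (hk0 : k ≠ 0) : c k = 0 := by
    simpa [trigPolyDerivCoeff, hk0, hT.ne', Real.pi_ne_zero] using hB k hk
  refine ⟨ha, hc, ?_⟩
  have := hagree ⟨0, by omega⟩
  rwa [trigPoly_eq_coeff_zero hc, ha, zero_mul, zero_add] at this

/-- **Null-space lemma (Appendix).** A real trigonometric polynomial of degree `K` and
period `T` that agrees with an affine function `a t + d` at `N ≥ 2K + 2` distinct points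
of `[0, T)` must be the constant `d` (and `a = 0`). -/
theorem trig_poly_eq_affine_many_points
    (K : ℕ) (hK : 0 < K) (T : ℝ) (hT : 0 < T)
    (c : ℤ → ℂ)
    (hconj : ∀ k : ℤ, k ∈ Finset.Icc (-(K : ℤ)) (K : ℤ) →
      c (-k) = (starRingEnd ℂ) (c k))
    (f : ℝ → ℂ)
    (hf : ∀ u : ℝ, f u = ∑ k ∈ Finset.Icc (-(K : ℤ)) (K : ℤ),
      c k * Complex.exp (Complex.I * (k : ℂ) * ((2 * Real.pi / T : ℝ) : ℂ) * (u : ℂ)))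
    (a d : ℝ)
    (N : ℕ) (hN : 2 * K + 2 ≤ N)
    (t : Fin N → ℝ) (ht_mono : StrictMono t)
    (ht_nonneg : ∀ n, 0 ≤ t n) (ht_lt : ∀ n, t n < T)
    (hagree : ∀ n : Fin N, f (t n) = ((a * t n + d : ℝ) : ℂ)) :
    a = 0 ∧ (∀ k : ℤ, k ∈ Finset.Icc (-(K : ℤ)) (K : ℤ) → k ≠ 0 → c k = 0) ∧ c 0 = (d : ℂ) :=
  trig_poly_eq_affine_many_points_general K T hT c hconj f hf a d N hN t ht_mono ht_nonneg ht_lt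
    hagree
end

section
/- Let y : ℝ → ℝ be measurable with |y(t)| ≤ c for all t, where 0 < c < b, let κ > 0, δ > 0, T > 0, and let K be a positive integer. Suppose t₀ = 0 < t₁ < t₂ < ⋯ is a sequence of real numbers such that (1/κ) ∫_{t_n}^{t_{n+1}} (y(s) + b) ds = δ for every n ≥ 0, and suppose the minimum firing-rate condition (b − c)/(κδ) ≥ (2K + 2)/T holds. Then t_{2K+2} ≤ T; in particular, at least N = 2K + 2 firing instants t₁ < t₂ < ⋯ < t_{2K+2} lie in the interval (0, T]. -/
open MeasureTheory

/-! Between two firings the integrand `y + b` is at least `b - c > 0` while its integral is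
`κδ`, so consecutive firings are at most `κδ / (b - c)` apart. Starting from `t₀ = 0`, the
`(2K + 2)`-th firing therefore happens by `(2K + 2) κδ / (b - c)`, which the rate condition
bounds by `T`. -/

theorem IntervalIntegrable.of_norm_le {E : Type*} [NormedAddCommGroup E] {μ : Measure ℝ}
    [IsLocallyFiniteMeasure μ] {f : ℝ → E} (hf : AEStronglyMeasurable f μ) {C : ℝ}
    (hC : ∀ x, ‖f x‖ ≤ C) (a b : ℝ) : IntervalIntegrable f μ a b :=
  (intervalIntegrable_iff).2 <|
    IntegrableOn.of_bound measure_Ioc_lt_top hf.restrict C (.of_forall hC)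

theorem intervalIntegral.mul_sub_le_integral_of_le {f : ℝ → ℝ} {m a b : ℝ} (hab : a ≤ b)
    (hf : IntervalIntegrable f volume a b) (hm : ∀ x ∈ Set.Icc a b, m ≤ f x) :
    m * (b - a) ≤ ∫ x in a..b, f x := by
  have := intervalIntegral.integral_mono_on hab intervalIntegrable_const hf hm
  rwa [intervalIntegral.integral_const, smul_eq_mul, mul_comm] at this

theorem le_add_nsmul_of_forall_succ_sub_le {α : Type*} [AddCommGroup α] [PartialOrder α]
    [IsOrderedAddMonoid α] {t : ℕ → α} {d : α} (h : ∀ n, t (n + 1) - t n ≤ d) :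
    ∀ n, t n ≤ t 0 + n • d
  | 0 => by rw [zero_nsmul, add_zero]
  | n + 1 =>
    calc t (n + 1) ≤ t n + d := sub_le_iff_le_add'.1 (h n)
      _ ≤ t 0 + n • d + d := add_le_add (le_add_nsmul_of_forall_succ_sub_le h n) le_rfl
      _ = t 0 + (n + 1) • d := by rw [succ_nsmul, add_assoc]

theorem iftem_firing_interval_le {y : ℝ → ℝ} (hy_meas : Measurable y) {b c κ δ a a' : ℝ}
    (hy_bdd : ∀ u, |y u| ≤ c) (hcb : c < b) (hκ : 0 < κ) (haa' : a ≤ a')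
    (hfire : (1 / κ) * ∫ s in a..a', (y s + b) = δ) :
    a' - a ≤ κ * δ / (b - c) := by
  have hint : IntervalIntegrable (fun s => y s + b) volume a a' :=
    .of_norm_le (hy_meas.add_const b).aestronglyMeasurable
      (fun u => (abs_add_le _ _).trans (add_le_add_left (hy_bdd u) _)) a a'
  have hlower : (b - c) * (a' - a) ≤ κ * δ := by
    have hκδ : ∫ s in a..a', (y s + b) = κ * δ := by
      rw [← hfire, ← mul_assoc, mul_one_div_cancel hκ.ne', one_mul]
    refine hκδ ▸ intervalIntegral.mul_sub_le_integral_of_le haa' hint fun s _ => ?_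
    linarith [(abs_le.1 (hy_bdd s)).1]
  rwa [le_div_iff₀ (sub_pos.2 hcb), mul_comm]

theorem iftem_min_firing_rate_general
    (y : ℝ → ℝ) (hy_meas : Measurable y)
    (b c κ δ T : ℝ) (hcb : c < b) (hκ : 0 < κ) (hδ : 0 < δ) (hT : 0 < T)
    (K : ℕ)
    (hy_bdd : ∀ u : ℝ, |y u| ≤ c)
    (t : ℕ → ℝ) (ht0 : t 0 = 0) (ht_mono : StrictMono t)
    (hfire : ∀ n : ℕ, (1 / κ) * ∫ s in (t n)..(t (n + 1)), (y s + b) = δ)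
    (hrate : (b - c) / (κ * δ) ≥ (2 * (K : ℝ) + 2) / T) :
    t (2 * K + 2) ≤ T := by
  have hgap (n : ℕ) : t (n + 1) - t n ≤ κ * δ / (b - c) :=
    iftem_firing_interval_le hy_meas hy_bdd hcb hκ (ht_mono.monotone n.le_succ) (hfire n)
  have hrate' : (2 * (K : ℝ) + 2) * (κ * δ / (b - c)) ≤ T := by
    rw [ge_iff_le, div_le_div_iff₀ hT (mul_pos hκ hδ)] at hrate
    rw [mul_div_assoc', div_le_iff₀ (sub_pos.2 hcb)]
    linarith
  calc t (2 * K + 2) ≤ t 0 + (2 * K + 2) • (κ * δ / (b - c)) :=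
        le_add_nsmul_of_forall_succ_sub_le hgap _
    _ = (2 * (K : ℝ) + 2) * (κ * δ / (b - c)) := by
        rw [ht0, zero_add, nsmul_eq_mul]; push_cast; rfl
    _ ≤ T := hrate'

/-- **Minimum firing-rate condition.** If the IF-TEM parameters satisfy
`(b - c)/(κδ) ≥ (2K + 2)/T`, then starting from `t₀ = 0` the IF-TEM fires at least
`2K + 2` times in the interval `(0, T]`, i.e. `t_{2K+2} ≤ T`. -/
theorem iftem_min_firing_rate
    (y : ℝ → ℝ) (hy_meas : Measurable y)
    (b c κ δ T : ℝ) (hc : 0 < c) (hcb : c < b) (hκ : 0 < κ) (hδ : 0 < δ) (hT : 0 < T)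
    (K : ℕ) (hK : 0 < K)
    (hy_bdd : ∀ u : ℝ, |y u| ≤ c)
    (t : ℕ → ℝ) (ht0 : t 0 = 0) (ht_mono : StrictMono t)
    (hfire : ∀ n : ℕ, (1 / κ) * ∫ s in (t n)..(t (n + 1)), (y s + b) = δ)
    (hrate : (b - c) / (κ * δ) ≥ (2 * (K : ℝ) + 2) / T) :
    t (2 * K + 2) ≤ T :=
  iftem_min_firing_rate_general y hy_meas b c κ δ T hcb hκ hδ hT K hy_bdd t ht0 ht_mono hfire hrate
end

section
/- Let T > 0, ω₀ = 2π/T, let 𝒦 ⊂ ℤ be a finite set, and let g : ℝ → ℂ be the sum-of-sincs kernel defined by g(t) = Σ_{k∈𝒦} e^{i k ω₀ t} for t ∈ (−T/2, T/2] and g(t) = 0 otherwise. Let x : ℝ → ℂ be T-periodic and Lebesgue integrable on [0, T]. Then for every t ∈ ℝ, the convolution (x * g)(t) = ∫_ℝ x(τ) g(t − τ) dτ satisfies (x * g)(t) = Σ_{k∈𝒦} (∫_0^T x(τ) e^{−i k ω₀ τ} dτ) e^{i k ω₀ t}. -/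
/-!
On the window `(u - T/2, u + T/2]` seen by `g (u - ·)`, each term of the kernel factors as
`e^{i k ω₀ (u - τ)} = e^{-i k ω₀ τ} e^{i k ω₀ u}`. The functions `x · e^{-i k ω₀ ·}` are
`T`-periodic, so their integrals over that window of length `T` equal those over `[0, T]`.
-/

open MeasureTheory Complex

lemma Complex.periodic_exp_mul_of_exp_mul_eq_one {T : ℝ} {c : ℂ} (h : exp (c * T) = 1) :
    Function.Periodic (fun τ : ℝ => exp (c * τ)) T := fun τ => by
  simp only [ofReal_add, mul_add, exp_add, h, mul_one]

lemma Complex.exp_neg_I_mul_int_mul_two_pi_div_mul_self {T : ℝ} (hT : T ≠ 0) (k : ℤ) :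
    exp (-I * k * ((2 * Real.pi / T : ℝ) : ℂ) * T) = 1 := by
  have hT' : (T : ℂ) ≠ 0 := ofReal_ne_zero.mpr hT
  rw [← exp_int_mul_two_pi_mul_I (-k)]
  congr 1
  push_cast
  field_simp

lemma integral_mul_indicator_Ioc_sub {R : Type*} [NormedRing R] [NormedSpace ℝ R]
    {a b : ℝ} (hab : a ≤ b) (f h : ℝ → R) (u : ℝ) :
    ∫ τ, f τ * (Set.Ioc a b).indicator h (u - τ) = ∫ τ in u - b..u - a, f τ * h (u - τ) := by
  have hind : ∀ τ, f τ * (Set.Ioc a b).indicator h (u - τ) =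
      (Set.Ico (u - b) (u - a)).indicator (fun τ => f τ * h (u - τ)) τ := fun τ => by
    rw [Set.indicator_mul_right, ← Set.preimage_const_sub_Ioc]
    exact congrArg (f τ * ·) (Set.indicator_comp_right (fun τ => u - τ)).symm
  simp_rw [hind]
  rw [integral_indicator measurableSet_Ico, integral_Ico_eq_integral_Ioc,
    intervalIntegral.integral_of_le (by linarith)]

/-- **Alias-cancellation property of the sum-of-sincs kernel.** Filtering a `T`-periodic
integrable signal `x` with the SoS kernel `g` retains exactly the Fourier-series
coefficients indexed by `𝒦` (scaled by `T`) and annihilates all others. -/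
theorem sos_kernel_alias_cancellation
    (T : ℝ) (hT : 0 < T) (𝒦 : Finset ℤ)
    (g : ℝ → ℂ)
    (hg : ∀ u : ℝ, g u =
      if u ∈ Set.Ioc (-T / 2) (T / 2) then
        ∑ k ∈ 𝒦, Complex.exp (Complex.I * (k : ℂ) * ((2 * Real.pi / T : ℝ) : ℂ) * (u : ℂ))
      else 0)
    (x : ℝ → ℂ) (hx_per : ∀ u : ℝ, x (u + T) = x u)
    (hx_int : IntegrableOn x (Set.Icc 0 T)) :
    ∀ u : ℝ, (∫ τ : ℝ, x τ * g (u - τ)) =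
      ∑ k ∈ 𝒦,
        (∫ τ in (0 : ℝ)..T, x τ *
            Complex.exp (-Complex.I * (k : ℂ) * ((2 * Real.pi / T : ℝ) : ℂ) * (τ : ℂ)))
          * Complex.exp (Complex.I * (k : ℂ) * ((2 * Real.pi / T : ℝ) : ℂ) * (u : ℂ)) := by
  intro u
  set ω : ℝ := 2 * Real.pi / T
  have hg_ind : g = (Set.Ioc (-T / 2) (T / 2)).indicator
      (fun v : ℝ => ∑ k ∈ 𝒦, exp (I * k * ω * v)) :=
    funext fun v => by rw [hg, Set.indicator_apply]
  have hsplit : ∀ τ : ℝ, x τ * ∑ k ∈ 𝒦, exp (I * k * ω * (u - τ : ℝ)) =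
      ∑ k ∈ 𝒦, x τ * exp (-I * k * ω * τ) * exp (I * k * ω * u) := fun τ => by
    rw [Finset.mul_sum]
    refine Finset.sum_congr rfl fun k _ => ?_
    rw [mul_assoc (x τ), ← exp_add]
    congr 2
    push_cast
    ring
  have hper : ∀ k : ℤ, Function.Periodic (fun τ : ℝ => x τ * exp (-I * k * ω * τ)) T :=
    fun k => Function.Periodic.mul hx_per
      (periodic_exp_mul_of_exp_mul_eq_one (exp_neg_I_mul_int_mul_two_pi_div_mul_self hT.ne' k))
  have hint : ∀ k : ℤ, IntervalIntegrable (fun τ : ℝ => x τ * exp (-I * k * ω * τ)) volume 0 T :=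
    fun k => ((intervalIntegrable_iff_integrableOn_Icc_of_le hT.le).mpr hx_int).mul_continuousOn
      (by fun_prop)
  rw [hg_ind, integral_mul_indicator_Ioc_sub (by linarith),
    show u - -T / 2 = u - T / 2 + T by ring]
  simp_rw [hsplit]
  rw [intervalIntegral.integral_finsetSum fun k _ =>
    ((hper k).intervalIntegrable₀ hT.ne' (hint k) _ _).mul_const _]
  refine Finset.sum_congr rfl fun k _ => ?_
  rw [intervalIntegral.integral_mul_const, (hper k).intervalIntegral_add_eq _ 0, zero_add]
end

section
/- Let T > 0, ω₀ = 2π/T, R > 0, and let h : ℝ → ℝ be a bounded measurable function with h(t) = 0 for all |t| ≥ R/2. Let a₁, …, a_L ∈ ℝ, τ₁, …, τ_L ∈ [0, T), and define the nonperiodic signal x̃(t) = Σ_{ℓ=1}^{L} a_ℓ h(t − τ_ℓ) and its T-periodization x(t) = Σ_{p∈ℤ} x̃(t − pT). Let 𝒦 ⊂ ℤ be finite, let g be the sum-of-sincs kernel g(t) = Σ_{k∈𝒦} e^{i k ω₀ t} for t ∈ (−T/2, T/2] and g(t) = 0 otherwise, and let S be a nonnegative integer with 2ST ≥ R + T. Define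 g̃(t) = Σ_{s=−S}^{S} g(t + sT). Then (x̃ * g̃)(t) = (x * g)(t) for every t ∈ [0, T). -/
/-!
For `u ∈ [0, T)` the kernel `g (u - ·)` is supported in a window of length `T` inside
`[-T/2, 3T/2]`, and since `x̃` is supported in `(-R/2, T + R/2)`, the condition `R + T ≤ 2ST`
guarantees that only the translates `x̃ (· - pT)` with `|p| ≤ S` meet that window. On the
support of `g (u - ·)` the periodization `x` is therefore the finite sum of these translates.
On the other side, a translation of the integration variable turns each term `g (· + sT)` of
`g̃` into the translate `x̃ (· - sT)`, so both integrals equal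
`∑_{|s| ≤ S} ∫ x̃ (t - sT) g (u - t) dt`.
-/

open MeasureTheory Finset

theorem Int.mem_Icc_of_abs_mul_lt {T : ℝ} (hT : 0 < T) {S : ℕ} {p : ℤ}
    (hp : |(p : ℝ) * T| < (S + 1) * T) : p ∈ Icc (-(S : ℤ)) S := by
  rw [abs_mul, abs_of_pos hT, mul_lt_mul_iff_left₀ hT, ← Int.cast_abs] at hp
  have : |p| < S + 1 := by exact_mod_cast hp
  rw [mem_Icc, ← abs_le]
  omega

theorem sum_Icc_neg_symm {M : Type*} [AddCommMonoid M] (S : ℤ) (f : ℤ → M) :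
    ∑ s ∈ Icc (-S) S, f (-s) = ∑ s ∈ Icc (-S) S, f s :=
  sum_equiv (Equiv.neg ℤ) (fun s => by simp only [mem_Icc, Equiv.neg_apply]; omega)
    fun _ _ => rfl

section TranslateSum

variable {ι : Type*} [Fintype ι] (a τ : ι → ℝ) {h : ℝ → ℝ}

theorem abs_sum_mul_translate_le {M : ℝ} (hM : ∀ v, |h v| ≤ M) (v : ℝ) :
    |∑ i, a i * h (v - τ i)| ≤ ∑ i, |a i| * M := by
  refine (abs_sum_le_sum_abs _ _).trans (sum_le_sum fun i _ => ?_)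
  rw [abs_mul]
  exact mul_le_mul_of_nonneg_left (hM _) (abs_nonneg _)

theorem support_sum_mul_translate_subset {T R : ℝ} (hh : ∀ v, R / 2 ≤ |v| → h v = 0)
    (hτ : ∀ i, τ i ∈ Set.Icc 0 T) :
    Function.support (fun v => ∑ i, a i * h (v - τ i)) ⊆ Set.Ioo (-(R / 2)) (T + R / 2) := by
  intro v hv
  by_contra hout
  refine hv (sum_eq_zero fun i _ => ?_)
  rw [hh _ ?_, mul_zero]
  obtain ⟨hτ0, hτT⟩ := hτ i
  rw [Set.mem_Ioo, not_and_or, not_lt, not_lt] at hout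
  rcases hout with hlo | hhi
  · exact le_abs.2 (Or.inr (by linarith))
  · exact le_abs.2 (Or.inl (by linarith))

end TranslateSum

theorem tsum_sub_int_mul_eq_sum_Icc {M : Type*} [AddCommMonoid M] [TopologicalSpace M]
    {T R : ℝ} (hT : 0 < T) {S : ℕ} (hS : R + T ≤ 2 * S * T) {f : ℝ → M}
    (hf : Function.support f ⊆ Set.Ioo (-(R / 2)) (T + R / 2)) {t : ℝ}
    (ht : t ∈ Set.Icc (-(T / 2)) (3 * T / 2)) :
    ∑' p : ℤ, f (t - p * T) = ∑ p ∈ Icc (-(S : ℤ)) S, f (t - p * T) := by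
  refine tsum_eq_sum fun p hp => Function.notMem_support.1 fun hmem => hp ?_
  obtain ⟨hlo, hhi⟩ := hf hmem
  refine Int.mem_Icc_of_abs_mul_lt hT (abs_lt.2 ⟨?_, ?_⟩) <;> linarith [ht.1, ht.2]

theorem tsum_sub_int_mul_mul_eq_sum_Icc {T R : ℝ} (hT : 0 < T) {S : ℕ}
    (hS : R + T ≤ 2 * S * T) {f : ℝ → ℝ}
    (hf : Function.support f ⊆ Set.Ioo (-(R / 2)) (T + R / 2))
    {k : ℝ → ℂ} (hk : Function.support k ⊆ Set.Ioc (-T / 2) (T / 2)) {u : ℝ}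
    (hu : u ∈ Set.Icc 0 T) (t : ℝ) :
    ((∑' p : ℤ, f (t - p * T) : ℝ) : ℂ) * k (u - t) =
      ∑ p ∈ Icc (-(S : ℤ)) S, (f (t - p * T) : ℂ) * k (u - t) := by
  by_cases hkt : u - t ∈ Function.support k
  · obtain ⟨hlo, hhi⟩ := hk hkt
    have ht : t ∈ Set.Icc (-(T / 2)) (3 * T / 2) := by
      constructor <;> linarith [hu.1, hu.2]
    rw [tsum_sub_int_mul_eq_sum_Icc hT hS hf ht, Complex.ofReal_sum, sum_mul]
  · simp [Function.notMem_support.1 hkt]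

theorem integral_mul_sum_sub_eq_sum_integral {ι : Type*} (I : Finset ι) (c : ι → ℝ)
    {f k : ℝ → ℂ} (u : ℝ) (hint : ∀ i ∈ I, Integrable fun t => f t * k (u - c i - t)) :
    ∫ t, f t * ∑ i ∈ I, k (u - t - c i) = ∑ i ∈ I, ∫ t, f (t - c i) * k (u - t) := by
  calc ∫ t, f t * ∑ i ∈ I, k (u - t - c i) = ∫ t, ∑ i ∈ I, f t * k (u - c i - t) := by
        simp_rw [mul_sum, sub_right_comm]
    _ = ∑ i ∈ I, ∫ t, f t * k (u - c i - t) := integral_finsetSum I hint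
    _ = ∑ i ∈ I, ∫ t, f (t - c i) * k (u - t) := sum_congr rfl fun i _ => by
        rw [← integral_sub_right_eq_self _ (c i)]
        simp_rw [sub_sub_sub_cancel_right]

theorem integrable_ofReal_mul_comp_sub_left {f : ℝ → ℝ} (hf : Measurable f) {C : ℝ}
    (hC : ∀ v, |f v| ≤ C) {k : ℝ → ℂ} (hk : Integrable k) (b : ℝ) :
    Integrable fun t => (f t : ℂ) * k (b - t) :=
  (hk.comp_sub_left b).bdd_mul (by fun_prop)
    (ae_of_all _ fun t => by rw [Complex.norm_real, Real.norm_eq_abs]; exact hC t)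

theorem nonperiodic_fri_filtering_eq_periodic_general
    (T : ℝ) (hT : 0 < T) (R : ℝ)
    (h : ℝ → ℝ) (hh_meas : Measurable h) (hh_bdd : ∃ M : ℝ, ∀ u : ℝ, |h u| ≤ M)
    (hh_supp : ∀ u : ℝ, R / 2 ≤ |u| → h u = 0)
    (L : ℕ) (a : Fin L → ℝ) (τ : Fin L → ℝ) (hτ : ∀ ℓ, τ ℓ ∈ Set.Ico 0 T)
    (xt : ℝ → ℝ) (hxt : ∀ u : ℝ, xt u = ∑ ℓ : Fin L, a ℓ * h (u - τ ℓ))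
    (x : ℝ → ℝ) (hx : ∀ u : ℝ, x u = ∑' p : ℤ, xt (u - (p : ℝ) * T))
    (𝒦 : Finset ℤ)
    (g : ℝ → ℂ)
    (hg : ∀ u : ℝ, g u =
      if u ∈ Set.Ioc (-T / 2) (T / 2) then
        ∑ k ∈ 𝒦, Complex.exp (Complex.I * (k : ℂ) * ((2 * Real.pi / T : ℝ) : ℂ) * (u : ℂ))
      else 0)
    (S : ℕ) (hS : R + T ≤ 2 * (S : ℝ) * T)
    (gt : ℝ → ℂ)
    (hgt : ∀ u : ℝ, gt u = ∑ s ∈ Finset.Icc (-(S : ℤ)) (S : ℤ), g (u + (s : ℝ) * T)) :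
    ∀ u : ℝ, u ∈ Set.Ico 0 T →
      (∫ τ' : ℝ, (xt τ' : ℂ) * gt (u - τ')) = ∫ τ' : ℝ, (x τ' : ℂ) * g (u - τ') := by
  intro u hu
  obtain ⟨M, hM⟩ := hh_bdd
  have hxt_eq : xt = fun v => ∑ ℓ, a ℓ * h (v - τ ℓ) := funext hxt
  have hxt_meas : Measurable xt := hxt_eq ▸ by fun_prop
  have hxt_supp : Function.support xt ⊆ Set.Ioo (-(R / 2)) (T + R / 2) := hxt_eq ▸
    support_sum_mul_translate_subset a τ hh_supp fun ℓ => Set.Ico_subset_Icc_self (hτ ℓ)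
  have hg_eq : g = (Set.Ioc (-T / 2) (T / 2)).indicator fun v =>
      ∑ k ∈ 𝒦, Complex.exp (Complex.I * (k : ℂ) * ((2 * Real.pi / T : ℝ) : ℂ) * (v : ℂ)) :=
    funext fun v => by rw [hg, Set.indicator_apply]
  have hg_int : Integrable g :=
    hg_eq ▸ (integrable_indicator_iff measurableSet_Ioc).2
      (Continuous.integrableOn_Ioc (by fun_prop))
  have hint (c b : ℝ) : Integrable fun t => (xt (t - c) : ℂ) * g (b - t) :=
    integrable_ofReal_mul_comp_sub_left (hxt_meas.comp (measurable_sub_const c))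
      (fun v => hxt _ ▸ abs_sum_mul_translate_le a τ hM _) hg_int b
  calc ∫ t, (xt t : ℂ) * gt (u - t)
      = ∫ t, (xt t : ℂ) * ∑ s ∈ Icc (-(S : ℤ)) S, g (u - t - s * T) := by
        simp_rw [hgt, ← sum_Icc_neg_symm (S : ℤ) fun s : ℤ => g (_ + s * T)]
        push_cast
        simp_rw [neg_mul, ← sub_eq_add_neg]
    _ = ∑ s ∈ Icc (-(S : ℤ)) S, ∫ t, (xt (t - s * T) : ℂ) * g (u - t) :=
        integral_mul_sum_sub_eq_sum_integral _ _ u fun s _ => by simpa using hint 0 _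
    _ = ∫ t, (x t : ℂ) * g (u - t) := by
        rw [← integral_finsetSum _ fun s _ => hint _ u]
        refine integral_congr_ae (ae_of_all _ fun t => ?_)
        dsimp only
        rw [hx, tsum_sub_int_mul_mul_eq_sum_Icc hT hS hxt_supp
          (hg_eq ▸ Set.support_indicator_subset) (Set.Ico_subset_Icc_self hu)]

/-- **Reduction of nonperiodic FRI sampling to the periodic case.** For a compactly
supported pulse, filtering the nonperiodic FRI signal with the periodized SoS kernel
`g̃` agrees on `[0, T)` with filtering the `T`-periodized signal with the SoS kernel
`g`. -/
theorem nonperiodic_fri_filtering_eq_periodic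
    (T : ℝ) (hT : 0 < T) (R : ℝ) (hR : 0 < R)
    (h : ℝ → ℝ) (hh_meas : Measurable h) (hh_bdd : ∃ M : ℝ, ∀ u : ℝ, |h u| ≤ M)
    (hh_supp : ∀ u : ℝ, R / 2 ≤ |u| → h u = 0)
    (L : ℕ) (a : Fin L → ℝ) (τ : Fin L → ℝ) (hτ : ∀ ℓ, τ ℓ ∈ Set.Ico 0 T)
    (xt : ℝ → ℝ) (hxt : ∀ u : ℝ, xt u = ∑ ℓ : Fin L, a ℓ * h (u - τ ℓ))
    (x : ℝ → ℝ) (hx : ∀ u : ℝ, x u = ∑' p : ℤ, xt (u - (p : ℝ) * T))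
    (𝒦 : Finset ℤ)
    (g : ℝ → ℂ)
    (hg : ∀ u : ℝ, g u =
      if u ∈ Set.Ioc (-T / 2) (T / 2) then
        ∑ k ∈ 𝒦, Complex.exp (Complex.I * (k : ℂ) * ((2 * Real.pi / T : ℝ) : ℂ) * (u : ℂ))
      else 0)
    (S : ℕ) (hS : R + T ≤ 2 * (S : ℝ) * T)
    (gt : ℝ → ℂ)
    (hgt : ∀ u : ℝ, gt u = ∑ s ∈ Finset.Icc (-(S : ℤ)) (S : ℤ), g (u + (s : ℝ) * T)) :
    ∀ u : ℝ, u ∈ Set.Ico 0 T →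
      (∫ τ' : ℝ, (xt τ' : ℂ) * gt (u - τ')) = ∫ τ' : ℝ, (x τ' : ℂ) * g (u - τ') :=
  nonperiodic_fri_filtering_eq_periodic_general T hT R h hh_meas hh_bdd hh_supp L a τ hτ xt hxt x hx
    𝒦 g hg S hS gt hgt
end

section
/- Let T > 0, ω₀ = 2π/T, let L ≥ 1 be an integer, and let k₀ ∈ ℤ. Let τ₁, …, τ_L ∈ [0, T) be pairwise distinct, σ₁, …, σ_L ∈ [0, T) be pairwise distinct, and let a₁, …, a_L and b₁, …, b_L be nonzero complex numbers. If Σ_{ℓ=1}^{L} a_ℓ e^{−i k ω₀ τ_ℓ} = Σ_{ℓ=1}^{L} b_ℓ e^{−i k ω₀ σ_ℓ} for every integer k with k₀ ≤ k ≤ k₀ + 2L − 1, then there exists a permutation π of {1, …, L} such that σ_ℓ = τ_{π(ℓ)} and b_ℓ = a_{π(ℓ)} for all ℓ. -/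
/-!
With `z = e^{-i ω₀ τ}` the samples are the moments `∑ ℓ, a ℓ * z ℓ ^ k`, `k₀ ≤ k < k₀ + 2L`,
of the discrete measure `∑ ℓ, a ℓ • δ (z ℓ)` on `ℂ`. The difference of the two measures is
supported on at most `2L` points, and a measure on `N` points whose first `N` moments vanish is
zero because the Vandermonde matrix of distinct points is invertible. Two equal measures with
nonzero weights on distinct nodes have the same nodes and weights, and the delays are recovered
from the nodes since `t ↦ e^{-i ω₀ t}` is injective on `[0, T)`.
-/

open Finset Complex Function

section ExponentialSums

theorem Finset.eq_zero_of_forall_sum_mul_pow_eq_zero {R : Type*} [CommRing R] [IsDomain R]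
    {s : Finset R} {c : R → R} (h : ∀ k < #s, ∑ u ∈ s, c u * u ^ k = 0) :
    ∀ u ∈ s, c u = 0 := by
  let e := s.equivFin.symm
  have hc : (fun j => c (e j)) = 0 := by
    refine Matrix.eq_zero_of_forall_pow_sum_mul_pow_eq_zero (f := fun j => (e j : R))
      (Subtype.val_injective.comp e.injective) fun k => ?_
    rw [← h k k.2, ← s.sum_coe_sort]
    exact e.sum_comp fun u : s => c u * (u : R) ^ (k : ℕ)
  intro u hu
  simpa using congrFun hc (e.symm ⟨u, hu⟩)

theorem Finsupp.eq_zero_of_forall_linearCombination_pow_eq_zero {R : Type*} [CommRing R]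
    [IsDomain R] {μ : R →₀ R} {N : ℕ} (hN : #μ.support ≤ N)
    (h : ∀ k < N, Finsupp.linearCombination R (· ^ k) μ = 0) : μ = 0 := by
  have hμ := Finset.eq_zero_of_forall_sum_mul_pow_eq_zero (s := μ.support) (c := μ)
    fun k hk => by simpa [linearCombination_apply, Finsupp.sum] using h k (hk.trans_le hN)
  ext u
  by_cases hu : u ∈ μ.support
  · exact hμ u hu
  · simpa using hu

variable {K ι κ : Type*} [Field K] [Fintype ι] [Fintype κ]

/-- The discrete measure `∑ i, a i • δ (z i)`; weights of coinciding nodes add up. -/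
noncomputable def diracSum (z a : ι → K) : K →₀ K :=
  Finsupp.mapDomain z (Finsupp.equivFunOnFinite.symm a)

theorem linearCombination_diracSum (z a : ι → K) (v : K → K) :
    Finsupp.linearCombination K v (diracSum z a) = ∑ i, a i * v (z i) := by
  rw [diracSum, Finsupp.linearCombination_mapDomain, Finsupp.linearCombination_apply,
    Finsupp.sum_fintype] <;> simp

theorem diracSum_apply {z : ι → K} (hz : Injective z) (a : ι → K) (i : ι) :
    diracSum z a (z i) = a i := by
  simp [diracSum, hz]

theorem card_support_diracSum_sub_le (z a : ι → K) (w b : κ → K) :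
    #(diracSum z a - diracSum w b).support ≤ Fintype.card ι + Fintype.card κ := by
  classical
  calc #(diracSum z a - diracSum w b).support
      ≤ #(univ.image z ∪ univ.image w) := by
        refine card_le_card (Finsupp.support_sub.trans (union_subset_union ?_ ?_)) <;>
          exact Finsupp.mapDomain_support.trans (image_subset_image (subset_univ _))
    _ ≤ Fintype.card ι + Fintype.card κ :=
        (card_union_le _ _).trans (add_le_add card_image_le card_image_le)

theorem diracSum_eq_of_forall_sum_mul_pow_eq {z a : ι → K} {w b : κ → K}
    (h : ∀ k < Fintype.card ι + Fintype.card κ, ∑ i, a i * z i ^ k = ∑ j, b j * w j ^ k) :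
    diracSum z a = diracSum w b :=
  sub_eq_zero.1 <| Finsupp.eq_zero_of_forall_linearCombination_pow_eq_zero
    (card_support_diracSum_sub_le z a w b) fun k hk => by
      rw [map_sub, linearCombination_diracSum, linearCombination_diracSum, h k hk, sub_self]

theorem exists_eq_of_diracSum_eq {z a : ι → K} {w b : κ → K} (hz : Injective z)
    (hw : Injective w) (hb : ∀ j, b j ≠ 0) (h : diracSum z a = diracSum w b) (j : κ) :
    ∃ i, w j = z i ∧ b j = a i := by
  have hne : diracSum z a (w j) ≠ 0 := by rw [h, diracSum_apply hw]; exact hb j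
  obtain ⟨i, hi⟩ := Finsupp.mem_range_of_mapDomain_ne_zero hne
  exact ⟨i, hi.symm, by rw [← diracSum_apply hw b j, ← h, ← hi, diracSum_apply hz]⟩

theorem exists_equiv_of_diracSum_eq {z a : ι → K} {w b : κ → K} (hz : Injective z)
    (hw : Injective w) (ha : ∀ i, a i ≠ 0) (hb : ∀ j, b j ≠ 0)
    (h : diracSum z a = diracSum w b) :
    ∃ e : κ ≃ ι, ∀ j, w j = z (e j) ∧ b j = a (e j) := by
  choose f hf using exists_eq_of_diracSum_eq hz hw hb h
  choose g hg using exists_eq_of_diracSum_eq hw hz ha h.symm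
  refine ⟨⟨f, g, fun j => hw ?_, fun i => hz ?_⟩, hf⟩
  · rw [← (hg (f j)).1, ← (hf j).1]
  · rw [← (hf (g i)).1, ← (hg i).1]

theorem exists_equiv_of_sum_mul_zpow_eq {z a : ι → K} {w b : κ → K} (hz : Injective z)
    (hw : Injective w) (hz₀ : ∀ i, z i ≠ 0) (hw₀ : ∀ j, w j ≠ 0) (ha : ∀ i, a i ≠ 0)
    (hb : ∀ j, b j ≠ 0) (k₀ : ℤ)
    (h : ∀ k < Fintype.card ι + Fintype.card κ,
      ∑ i, a i * z i ^ (k₀ + k) = ∑ j, b j * w j ^ (k₀ + k)) :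
    ∃ e : κ ≃ ι, ∀ j, w j = z (e j) ∧ b j = a (e j) := by
  have hshift : diracSum z (fun i => a i * z i ^ k₀) = diracSum w (fun j => b j * w j ^ k₀) :=
    diracSum_eq_of_forall_sum_mul_pow_eq fun k hk => by
      simpa only [zpow_add₀ (hz₀ _), zpow_add₀ (hw₀ _), zpow_natCast, mul_assoc] using h k hk
  obtain ⟨e, he⟩ := exists_equiv_of_diracSum_eq hz hw
    (fun i => mul_ne_zero (ha i) (zpow_ne_zero _ (hz₀ i)))
    (fun j => mul_ne_zero (hb j) (zpow_ne_zero _ (hw₀ j))) hshift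
  refine ⟨e, fun j => ⟨(he j).1, mul_right_cancel₀ (zpow_ne_zero k₀ (hw₀ j)) ?_⟩⟩
  rw [(he j).2, (he j).1]

end ExponentialSums

theorem Complex.injOn_exp_neg_I_mul_ofReal_Ico {ω T : ℝ} (hω : 0 < ω)
    (hωT : ω * T ≤ 2 * Real.pi) :
    Set.InjOn (fun t : ℝ => cexp (-I * ω * t)) (Set.Ico 0 T) := by
  have hmaps : Set.MapsTo (fun t : ℝ => -(ω * t)) (Set.Ico 0 T) (Set.Ioc (-(2 * Real.pi)) 0) :=
    fun t ⟨h₀, hT⟩ => ⟨by nlinarith, by nlinarith⟩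
  have hinj : Set.InjOn (fun t : ℝ => -(ω * t)) (Set.Ico 0 T) := fun s _ t _ hst =>
    mul_left_cancel₀ hω.ne' (neg_inj.1 hst)
  have := (Subtype.val_injective.injOn.comp
    ((Circle.exp_injOn_Ioc (by simp)).comp hinj hmaps) (Set.mapsTo_univ _ _))
  convert this using 2 with t
  change _ = cexp _
  push_cast
  ring_nf

theorem sum_of_exponentials_uniqueness_general
    (T : ℝ) (hT : 0 < T) (L : ℕ) (k₀ : ℤ)
    (τ σ : Fin L → ℝ)
    (hτ_mem : ∀ ℓ, τ ℓ ∈ Set.Ico 0 T) (hσ_mem : ∀ ℓ, σ ℓ ∈ Set.Ico 0 T)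
    (hτ_inj : Function.Injective τ) (hσ_inj : Function.Injective σ)
    (a b : Fin L → ℂ) (ha : ∀ ℓ, a ℓ ≠ 0) (hb : ∀ ℓ, b ℓ ≠ 0)
    (hsamples : ∀ k : ℤ, k₀ ≤ k → k ≤ k₀ + 2 * (L : ℤ) - 1 →
      (∑ ℓ : Fin L, a ℓ *
          Complex.exp (-Complex.I * (k : ℂ) * ((2 * Real.pi / T : ℝ) : ℂ) * (τ ℓ : ℂ)))
        = ∑ ℓ : Fin L, b ℓ *
            Complex.exp (-Complex.I * (k : ℂ) * ((2 * Real.pi / T : ℝ) : ℂ) * (σ ℓ : ℂ))) :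
    ∃ π : Equiv.Perm (Fin L), ∀ ℓ : Fin L, σ ℓ = τ (π ℓ) ∧ b ℓ = a (π ℓ) := by
  set ω : ℝ := 2 * Real.pi / T
  have hnode := Complex.injOn_exp_neg_I_mul_ofReal_Ico (ω := ω) (T := T) (by positivity)
    (div_mul_cancel₀ _ hT.ne').le
  have hpow (k : ℤ) (t : ℝ) : cexp (-I * k * ω * t) = cexp (-I * ω * t) ^ k := by
    rw [← Complex.exp_int_mul]
    ring_nf
  have hmoments (k : ℕ) (hk : k < Fintype.card (Fin L) + Fintype.card (Fin L)) :
      ∑ ℓ, a ℓ * cexp (-I * ω * τ ℓ) ^ (k₀ + k) = ∑ ℓ, b ℓ * cexp (-I * ω * σ ℓ) ^ (k₀ + k) := by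
    rw [Fintype.card_fin] at hk
    simpa only [hpow] using hsamples (k₀ + k) (by omega) (by omega)
  obtain ⟨π, hπ⟩ := exists_equiv_of_sum_mul_zpow_eq
    (fun i j h => hτ_inj (hnode (hτ_mem i) (hτ_mem j) h))
    (fun i j h => hσ_inj (hnode (hσ_mem i) (hσ_mem j) h))
    (fun _ => exp_ne_zero _) (fun _ => exp_ne_zero _) ha hb k₀ hmoments
  exact ⟨π, fun ℓ => ⟨hnode (hσ_mem ℓ) (hτ_mem (π ℓ)) (hπ ℓ).1, (hπ ℓ).2⟩⟩

/-- **Spectral-estimation uniqueness.** `2L` consecutive samples of a sum of `L`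
complex exponentials with pairwise distinct nodes `e^{-i ω₀ τ_ℓ}` on the unit circle
uniquely determine the amplitudes and delays, up to a permutation. -/
theorem sum_of_exponentials_uniqueness
    (T : ℝ) (hT : 0 < T) (L : ℕ) (hL : 1 ≤ L) (k₀ : ℤ)
    (τ σ : Fin L → ℝ)
    (hτ_mem : ∀ ℓ, τ ℓ ∈ Set.Ico 0 T) (hσ_mem : ∀ ℓ, σ ℓ ∈ Set.Ico 0 T)
    (hτ_inj : Function.Injective τ) (hσ_inj : Function.Injective σ)
    (a b : Fin L → ℂ) (ha : ∀ ℓ, a ℓ ≠ 0) (hb : ∀ ℓ, b ℓ ≠ 0)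
    (hsamples : ∀ k : ℤ, k₀ ≤ k → k ≤ k₀ + 2 * (L : ℤ) - 1 →
      (∑ ℓ : Fin L, a ℓ *
          Complex.exp (-Complex.I * (k : ℂ) * ((2 * Real.pi / T : ℝ) : ℂ) * (τ ℓ : ℂ)))
        = ∑ ℓ : Fin L, b ℓ *
            Complex.exp (-Complex.I * (k : ℂ) * ((2 * Real.pi / T : ℝ) : ℂ) * (σ ℓ : ℂ))) :
    ∃ π : Equiv.Perm (Fin L), ∀ ℓ : Fin L, σ ℓ = τ (π ℓ) ∧ b ℓ = a (π ℓ) :=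
  sum_of_exponentials_uniqueness_general T hT L k₀ τ σ hτ_mem hσ_mem hτ_inj hσ_inj a b ha hb
    hsamples
end
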